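/- arXiv:2110.09670 — 4 statements merged into one kernel-verified Lean document; each statement's English description precedes it below -/
import Mathlib

section
/- Let n ≥ 4 and let x, y, N ∈ ℝ^n. Then the sample distance covariance estimator satisfies the decomposition inequality Ω_n(x + N, y) ≤ Ω_n(x, y) + Ω_n(N, y) + (4 / (n(n−2)(n−3))) · Σ_{i=1}^n [ (Σ_{l=1}^n |N_i − N_l|) · (Σ_{l=1}^n |y_i − y_l|) ]. -/
open scoped BigOperators

/-- Unbiased sample distance covariance estimator for univariate samples `p q : Fin n → ℝ`. -/
noncomputable def sampleDCov (n : ℕ) (p q : Fin n → ℝ) : ℝ :=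
  (1 / ((n : ℝ) * ((n : ℝ) - 3))) *
      ∑ i, ∑ j, if i ≠ j then |p i - p j| * |q i - q j| else 0
    - (2 / ((n : ℝ) * ((n : ℝ) - 2) * ((n : ℝ) - 3))) *
      ∑ i, (∑ l, |p i - p l|) * (∑ l, |q i - q l|)
    + (∑ i, ∑ j, |p i - p j|) * (∑ k, ∑ l, |q k - q l|) /
      ((n : ℝ) * ((n : ℝ) - 1) * ((n : ℝ) - 2) * ((n : ℝ) - 3))

private lemma sum_ite_diag {n : ℕ} (f : Fin n → Fin n → ℝ) (g : ℝ) :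
    (∑ i, ∑ j, if i ≠ j then f i j else g) =
    (∑ i, ∑ j, if i ≠ j then f i j else 0) + (n : ℝ) * g := by
  have h : ∀ i : Fin n, (∑ j, if i ≠ j then f i j else g) =
      (∑ j, if i ≠ j then f i j else 0) + g := by
    intro i
    calc (∑ j, if i ≠ j then f i j else g)
        = ∑ j, ((if i ≠ j then f i j else 0) + (if i = j then g else 0)) :=
          Finset.sum_congr rfl fun j _ => by by_cases h : i = j <;> simp [h]
      _ = (∑ j, if i ≠ j then f i j else 0) + ∑ j, (if i = j then g else 0) :=
          Finset.sum_add_distrib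
      _ = (∑ j, if i ≠ j then f i j else 0) + g := by
          rw [Finset.sum_ite_eq]; simp
  calc (∑ i, ∑ j, if i ≠ j then f i j else g)
      = ∑ i : Fin n, ((∑ j, if i ≠ j then f i j else 0) + g) :=
        Finset.sum_congr rfl fun i _ => h i
    _ = (∑ i, ∑ j, if i ≠ j then f i j else 0) + (n : ℝ) * g := by
        rw [Finset.sum_add_distrib, Finset.sum_const, Finset.card_univ, Fintype.card_fin,
          nsmul_eq_mul]

private lemma dcov_core (a b d q s1' s1x s1n s2' s2x s2n t' tx tn yc : ℝ)
    (ha : 0 ≤ a) (hb : 0 ≤ b) (hd : 0 ≤ d) (hq : 2 * b ≤ q)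
    (hS1 : s1' ≤ s1x + s1n) (hS2 : s2x - s2n ≤ s2') (hS3 : t' ≤ tx + tn)
    (hYc : 0 ≤ yc) (hs2n : 0 ≤ s2n) :
    a * s1' + (0 - b * s2' + t' * yc * d) ≤
      (a * s1x + (0 - b * s2x + tx * yc * d)) +
      (a * s1n + (0 - b * s2n + tn * yc * d)) + q * s2n := by
  have h1 := mul_le_mul_of_nonneg_left hS1 ha
  have h2 := mul_le_mul_of_nonneg_left hS2 hb
  have h3 := mul_le_mul_of_nonneg_right (mul_le_mul_of_nonneg_right hS3 hYc) hd
  have h4 := mul_nonneg (by linarith : (0:ℝ) ≤ q - 2 * b) hs2n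
  nlinarith [h1, h2, h3, h4]

private lemma dcov_aux (nr s1' s1x s1n s2' s2x s2n t' tx tn yc : ℝ)
    (hn4 : 4 ≤ nr)
    (hS1 : s1' ≤ s1x + s1n) (hS2 : s2x - s2n ≤ s2') (hS3 : t' ≤ tx + tn)
    (hYc : 0 ≤ yc) (hs2n : 0 ≤ s2n) :
    1 / (nr * (nr - 3)) *
        (s1' + nr * (0 - 2 / (nr * (nr - 2) * (nr - 3)) * s2' +
          t' * yc / (nr * (nr - 1) * (nr - 2) * (nr - 3)))) ≤
      1 / (nr * (nr - 3)) *
        (s1x + nr * (0 - 2 / (nr * (nr - 2) * (nr - 3)) * s2x +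
          tx * yc / (nr * (nr - 1) * (nr - 2) * (nr - 3)))) +
      1 / (nr * (nr - 3)) *
        (s1n + nr * (0 - 2 / (nr * (nr - 2) * (nr - 3)) * s2n +
          tn * yc / (nr * (nr - 1) * (nr - 2) * (nr - 3)))) +
      4 / (nr * (nr - 2) * (nr - 3)) * s2n := by
  have hn0 : (0:ℝ) < nr := by linarith
  have h1p : (0:ℝ) < nr - 1 := by linarith
  have h2p : (0:ℝ) < nr - 2 := by linarith
  have h3p : (0:ℝ) < nr - 3 := by linarith
  have hn0' : nr ≠ 0 := ne_of_gt hn0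
  have h1p' : nr - 1 ≠ 0 := ne_of_gt h1p
  have h2p' : nr - 2 ≠ 0 := ne_of_gt h2p
  have h3p' : nr - 3 ≠ 0 := ne_of_gt h3p
  set a : ℝ := 1 / (nr * (nr - 3)) with hadef
  set b : ℝ := 2 / ((nr - 3) * (nr * (nr - 2) * (nr - 3))) with hbdef
  set d : ℝ := 1 / ((nr - 3) * (nr * (nr - 1) * (nr - 2) * (nr - 3))) with hddef
  have hrew : ∀ s1 s2 t : ℝ,
      1 / (nr * (nr - 3)) *
        (s1 + nr * (0 - 2 / (nr * (nr - 2) * (nr - 3)) * s2 +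
          t * yc / (nr * (nr - 1) * (nr - 2) * (nr - 3)))) =
      a * s1 + (0 - b * s2 + t * yc * d) := by
    intro s1 s2 t
    rw [hadef, hbdef, hddef]
    field_simp
    ring
  rw [hrew, hrew, hrew]
  have ha : 0 ≤ a := by rw [hadef]; positivity
  have hb : 0 ≤ b := by rw [hbdef]; positivity
  have hd : 0 ≤ d := by rw [hddef]; positivity
  have hq : 2 * b ≤ 4 / (nr * (nr - 2) * (nr - 3)) := by
    have hE : (0:ℝ) < nr * (nr - 2) * (nr - 3) := by positivity
    have h2b : 2 * b = 4 / ((nr - 3) * (nr * (nr - 2) * (nr - 3))) := by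
      rw [hbdef]; ring
    rw [h2b]
    apply div_le_div_of_nonneg_left (by norm_num) hE
    nlinarith
  exact dcov_core a b d _ s1' s1x s1n s2' s2x s2n t' tx tn yc ha hb hd hq hS1 hS2 hS3 hYc hs2n

/-- Decomposition inequality for the sample distance covariance of noised data. -/
theorem sampleDCov_noise_decomposition (n : ℕ) (hn : 4 ≤ n)
    (x y N : Fin n → ℝ) :
    sampleDCov n (x + N) y ≤
      sampleDCov n x y + sampleDCov n N y +
        (4 / ((n : ℝ) * ((n : ℝ) - 2) * ((n : ℝ) - 3))) *
          ∑ i, (∑ l, |N i - N l|) * (∑ l, |y i - y l|) := by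

  have hn4 : (4:ℝ) ≤ (n:ℝ) := by exact_mod_cast hn
  simp only [sampleDCov, Pi.add_apply]
  set G1 : ℝ := 0 - 2 / ((n:ℝ) * ((n:ℝ) - 2) * ((n:ℝ) - 3)) *
      ∑ i, (∑ l, |x i + N i - (x l + N l)|) * ∑ l, |y i - y l| +
      (∑ i, ∑ j, |x i + N i - (x j + N j)|) * (∑ k, ∑ l, |y k - y l|) /
      ((n:ℝ) * ((n:ℝ) - 1) * ((n:ℝ) - 2) * ((n:ℝ) - 3)) with hG1
  set G2 : ℝ := 0 - 2 / ((n:ℝ) * ((n:ℝ) - 2) * ((n:ℝ) - 3)) *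
      ∑ i, (∑ l, |x i - x l|) * ∑ l, |y i - y l| +
      (∑ i, ∑ j, |x i - x j|) * (∑ k, ∑ l, |y k - y l|) /
      ((n:ℝ) * ((n:ℝ) - 1) * ((n:ℝ) - 2) * ((n:ℝ) - 3)) with hG2
  set G3 : ℝ := 0 - 2 / ((n:ℝ) * ((n:ℝ) - 2) * ((n:ℝ) - 3)) *
      ∑ i, (∑ l, |N i - N l|) * ∑ l, |y i - y l| +
      (∑ i, ∑ j, |N i - N j|) * (∑ k, ∑ l, |y k - y l|) /
      ((n:ℝ) * ((n:ℝ) - 1) * ((n:ℝ) - 2) * ((n:ℝ) - 3)) with hG3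
  rw [sum_ite_diag _ G1, sum_ite_diag _ G2, sum_ite_diag _ G3, hG1, hG2, hG3]
  have hS1 : (∑ i, ∑ j, if i ≠ j then |x i + N i - (x j + N j)| * |y i - y j| else 0) ≤
      (∑ i, ∑ j, if i ≠ j then |x i - x j| * |y i - y j| else 0) +
      (∑ i, ∑ j, if i ≠ j then |N i - N j| * |y i - y j| else 0) := by
    rw [← Finset.sum_add_distrib]
    refine Finset.sum_le_sum fun i _ => ?_
    rw [← Finset.sum_add_distrib]
    refine Finset.sum_le_sum fun j _ => ?_
    split_ifs with h
    · rw [← add_mul]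
      refine mul_le_mul_of_nonneg_right ?_ (abs_nonneg _)
      calc |x i + N i - (x j + N j)| = |(x i - x j) + (N i - N j)| := by congr 1; ring
        _ ≤ |x i - x j| + |N i - N j| := abs_add_le _ _
    · simp
  have hS2 : (∑ i, (∑ l, |x i - x l|) * (∑ l, |y i - y l|)) -
      (∑ i, (∑ l, |N i - N l|) * (∑ l, |y i - y l|)) ≤
      ∑ i, (∑ l, |x i + N i - (x l + N l)|) * (∑ l, |y i - y l|) := by
    rw [← Finset.sum_sub_distrib]
    refine Finset.sum_le_sum fun i _ => ?_
    rw [← sub_mul]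
    refine mul_le_mul_of_nonneg_right ?_ (Finset.sum_nonneg fun l _ => abs_nonneg _)
    rw [sub_le_iff_le_add, ← Finset.sum_add_distrib]
    refine Finset.sum_le_sum fun l _ => ?_
    calc |x i - x l| = |(x i + N i - (x l + N l)) + (N l - N i)| := by congr 1; ring
      _ ≤ |x i + N i - (x l + N l)| + |N l - N i| := abs_add_le _ _
      _ = |x i + N i - (x l + N l)| + |N i - N l| := by rw [abs_sub_comm (N l) (N i)]
  have hS3 : (∑ i, ∑ j, |x i + N i - (x j + N j)|) ≤
      (∑ i, ∑ j, |x i - x j|) + (∑ i, ∑ j, |N i - N j|) := by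
    rw [← Finset.sum_add_distrib]
    refine Finset.sum_le_sum fun i _ => ?_
    rw [← Finset.sum_add_distrib]
    refine Finset.sum_le_sum fun j _ => ?_
    calc |x i + N i - (x j + N j)| = |(x i - x j) + (N i - N j)| := by congr 1; ring
      _ ≤ |x i - x j| + |N i - N j| := abs_add_le _ _
  have hYc : (0:ℝ) ≤ ∑ k, ∑ l, |y k - y l| :=
    Finset.sum_nonneg fun k _ => Finset.sum_nonneg fun l _ => abs_nonneg _
  have hs2n : (0:ℝ) ≤ ∑ i, (∑ l, |N i - N l|) * (∑ l, |y i - y l|) :=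
    Finset.sum_nonneg fun i _ => mul_nonneg
      (Finset.sum_nonneg fun l _ => abs_nonneg _)
      (Finset.sum_nonneg fun l _ => abs_nonneg _)
  exact dcov_aux (n:ℝ) _ _ _ _ _ _ _ _ _ _ hn4 hS1 hS2 hS3 hYc hs2n
end

section
/- Let n ≥ 4, K ≥ 1, and let X_1, …, X_n ∈ ℝ^p, Y_1, …, Y_n ∈ ℝ^q be data vectors, N ∈ ℝ^n a noise vector, and u_1, …, u_K ∈ ℝ^p, v_1, …, v_K ∈ ℝ^q projection vectors. Define the private estimator Ω̄^dp(X,Y) = Σ_{k=1}^K (C_p C_q / K) · Ω_n(u_k^T X + N, v_k^T Y) and the non-private estimator Ω̄(X,Y) = Σ_{k=1}^K (C_p C_q / K) · Ω_n(u_k^T X, v_k^T Y), where u_k^T X denotes the vector (u_k^T X_1, …, u_k^T X_n) ∈ ℝ^n and similarly for v_k^T Y. Then Ω̄^dp(X,Y) − Ω̄(X,Y) ≤ Σ_{k=1}^K (C_p C_q / K) · Ω_n(N, v_k^T Y) + Σ_{k=1}^K (4 C_p C_q / (K n (n−2)(n−3))) · Σ_{i=1}^n [ (Σ_{l=1}^n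 |N_i − N_l|) · (Σ_{l=1}^n |v_k^T(Y_i − Y_l)|) ]. -/
open scoped BigOperators

/-- The constant `C_p = √π Γ((p+1)/2) / Γ(p/2)`. -/
noncomputable def Cconst (p : ℕ) : ℝ :=
  Real.sqrt Real.pi * Real.Gamma (((p : ℝ) + 1) / 2) / Real.Gamma ((p : ℝ) / 2)

lemma Cconst_nonneg (p : ℕ) : 0 ≤ Cconst p := by
  unfold Cconst
  apply div_nonneg
  · exact mul_nonneg (Real.sqrt_nonneg _) (Real.Gamma_nonneg_of_nonneg (by positivity))
  · exact Real.Gamma_nonneg_of_nonneg (by positivity)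

lemma sum_ite_ne (n : ℕ) (A : Fin n → Fin n → ℝ) (C : ℝ) :
    (∑ i, ∑ j, if i ≠ j then A i j else C) =
      (∑ i, ∑ j, if i ≠ j then A i j else 0) + (n : ℝ) * C := by
  have h : ∀ i : Fin n, (∑ j, if i ≠ j then A i j else C) =
      (∑ j, if i ≠ j then A i j else 0) + C := by
    intro i
    have : ∀ j : Fin n, (if i ≠ j then A i j else C) =
        (if i ≠ j then A i j else 0) + (if i = j then C else 0) := by
      intro j; by_cases h : i = j <;> simp [h]
    rw [Finset.sum_congr rfl fun j _ => this j, Finset.sum_add_distrib,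
      Finset.sum_ite_eq]
    simp
  rw [Finset.sum_congr rfl fun i _ => h i, Finset.sum_add_distrib]
  simp [mul_comm]

lemma sampleDCov_eq (n : ℕ) (p q : Fin n → ℝ) :
    sampleDCov n p q =
      (1 / ((n : ℝ) * ((n : ℝ) - 3))) *
        ((∑ i, ∑ j, if i ≠ j then |p i - p j| * |q i - q j| else 0)
          + (n : ℝ) *
            (0 - (2 / ((n : ℝ) * ((n : ℝ) - 2) * ((n : ℝ) - 3))) *
                (∑ i, (∑ l, |p i - p l|) * (∑ l, |q i - q l|))
              + (∑ i, ∑ j, |p i - p j|) * (∑ k, ∑ l, |q k - q l|) /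
                ((n : ℝ) * ((n : ℝ) - 1) * ((n : ℝ) - 2) * ((n : ℝ) - 3)))) := by
  unfold sampleDCov
  rw [sum_ite_ne]

lemma alg2 (c1 c2 D nn ec F1a F1a' F1N F2a F2a' F2N Sa Sa' SN Sb : ℝ)
    (hc1 : 0 ≤ c1) (hc2 : 0 ≤ c2) (hD : 0 < D) (hSb : 0 ≤ Sb) (hnn : 0 ≤ nn)
    (hF2N : 0 ≤ F2N) (hcc : 2 * (nn * c1) * c2 ≤ ec)
    (hA1 : F1a' ≤ F1a + F1N) (hA2 : F2a ≤ F2a' + F2N) (hA3 : Sa' ≤ Sa + SN) :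
    c1 * (F1a' + nn * (0 - c2 * F2a' + Sa' * Sb / D))
      - c1 * (F1a + nn * (0 - c2 * F2a + Sa * Sb / D)) ≤
      c1 * (F1N + nn * (0 - c2 * F2N + SN * Sb / D)) + ec * F2N := by
  simp only [div_eq_mul_inv]
  have hk : 0 ≤ nn * c1 := mul_nonneg hnn hc1
  have hkc : 0 ≤ nn * c1 * c2 := mul_nonneg hk hc2
  have hDi : (0:ℝ) ≤ D⁻¹ := inv_nonneg.mpr hD.le
  have h1 := mul_le_mul_of_nonneg_left hA1 hc1
  have h2 := mul_le_mul_of_nonneg_left hA2 hkc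
  have h3 := mul_le_mul_of_nonneg_left (mul_le_mul_of_nonneg_right hA3 hSb)
    (mul_nonneg hk hDi)
  have h4 := mul_le_mul_of_nonneg_right hcc hF2N
  nlinarith [h1, h2, h3, h4]

lemma key (n : ℕ) (hn : 4 ≤ n) (a N b : Fin n → ℝ) :
    sampleDCov n (fun i => a i + N i) b - sampleDCov n a b ≤
      sampleDCov n N b + 4 / ((n:ℝ) * ((n:ℝ) - 2) * ((n:ℝ) - 3)) *
        ∑ i, (∑ l, |N i - N l|) * (∑ l, |b i - b l|) := by
  have hn4 : (4:ℝ) ≤ (n:ℝ) := by exact_mod_cast hn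
  have h0 : (0:ℝ) < n := by linarith
  have h3p : (0:ℝ) < (n:ℝ) - 3 := by linarith
  have h2p : (0:ℝ) < (n:ℝ) - 2 := by linarith
  have h1p : (0:ℝ) < (n:ℝ) - 1 := by linarith
  have hc1 : (0:ℝ) ≤ 1 / ((n:ℝ) * ((n:ℝ) - 3)) := by positivity
  have hc2 : (0:ℝ) ≤ 2 / ((n:ℝ) * ((n:ℝ) - 2) * ((n:ℝ) - 3)) := by positivity
  have hD : (0:ℝ) < (n:ℝ) * ((n:ℝ) - 1) * ((n:ℝ) - 2) * ((n:ℝ) - 3) := by positivity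
  have hSb : (0:ℝ) ≤ ∑ i, ∑ j, |b i - b j| :=
    Finset.sum_nonneg fun i _ => Finset.sum_nonneg fun j _ => abs_nonneg _
  have hF2N : (0:ℝ) ≤ ∑ i, (∑ l, |N i - N l|) * (∑ l, |b i - b l|) :=
    Finset.sum_nonneg fun i _ =>
      mul_nonneg (Finset.sum_nonneg fun l _ => abs_nonneg _)
        (Finset.sum_nonneg fun l _ => abs_nonneg _)
  have hcc : 2 * ((n:ℝ) * (1 / ((n:ℝ) * ((n:ℝ) - 3)))) *
        (2 / ((n:ℝ) * ((n:ℝ) - 2) * ((n:ℝ) - 3)))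
      ≤ 4 / ((n:ℝ) * ((n:ℝ) - 2) * ((n:ℝ) - 3)) := by
    have h1 : (1:ℝ) / ((n:ℝ) - 3) ≤ 1 := by
      rw [div_le_one h3p]; linarith
    have e : 2 * ((n:ℝ) * (1 / ((n:ℝ) * ((n:ℝ) - 3)))) *
          (2 / ((n:ℝ) * ((n:ℝ) - 2) * ((n:ℝ) - 3)))
        = (1 / ((n:ℝ) - 3)) * (4 / ((n:ℝ) * ((n:ℝ) - 2) * ((n:ℝ) - 3))) := by
      field_simp
      ring
    rw [e]
    calc (1 / ((n:ℝ) - 3)) * (4 / ((n:ℝ) * ((n:ℝ) - 2) * ((n:ℝ) - 3)))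
        ≤ 1 * (4 / ((n:ℝ) * ((n:ℝ) - 2) * ((n:ℝ) - 3))) :=
          mul_le_mul_of_nonneg_right h1 (by positivity)
      _ = 4 / ((n:ℝ) * ((n:ℝ) - 2) * ((n:ℝ) - 3)) := one_mul _
  have hA1 : (∑ i, ∑ j, if i ≠ j then |(a i + N i) - (a j + N j)| * |b i - b j| else 0)
      ≤ (∑ i, ∑ j, if i ≠ j then |a i - a j| * |b i - b j| else 0)
        + (∑ i, ∑ j, if i ≠ j then |N i - N j| * |b i - b j| else 0) := by
    rw [← Finset.sum_add_distrib]
    refine Finset.sum_le_sum fun i _ => ?_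
    rw [← Finset.sum_add_distrib]
    refine Finset.sum_le_sum fun j _ => ?_
    split
    · rw [← add_mul]
      refine mul_le_mul_of_nonneg_right ?_ (abs_nonneg _)
      calc |(a i + N i) - (a j + N j)| = |(a i - a j) + (N i - N j)| := by ring_nf
        _ ≤ |a i - a j| + |N i - N j| := abs_add_le _ _
    · simp
  have hA2 : (∑ i, (∑ l, |a i - a l|) * (∑ l, |b i - b l|))
      ≤ (∑ i, (∑ l, |(a i + N i) - (a l + N l)|) * (∑ l, |b i - b l|))
        + (∑ i, (∑ l, |N i - N l|) * (∑ l, |b i - b l|)) := by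
    rw [← Finset.sum_add_distrib]
    refine Finset.sum_le_sum fun i _ => ?_
    rw [← add_mul]
    refine mul_le_mul_of_nonneg_right ?_
      (Finset.sum_nonneg fun l _ => abs_nonneg _)
    rw [← Finset.sum_add_distrib]
    refine Finset.sum_le_sum fun l _ => ?_
    calc |a i - a l| = |((a i + N i) - (a l + N l)) - (N i - N l)| := by ring_nf
      _ ≤ |(a i + N i) - (a l + N l)| + |N i - N l| := abs_sub _ _
  have hA3 : (∑ i, ∑ j, |(a i + N i) - (a j + N j)|)
      ≤ (∑ i, ∑ j, |a i - a j|) + (∑ i, ∑ j, |N i - N j|) := by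
    rw [← Finset.sum_add_distrib]
    refine Finset.sum_le_sum fun i _ => ?_
    rw [← Finset.sum_add_distrib]
    refine Finset.sum_le_sum fun j _ => ?_
    calc |(a i + N i) - (a j + N j)| = |(a i - a j) + (N i - N j)| := by ring_nf
      _ ≤ |a i - a j| + |N i - N j| := abs_add_le _ _
  rw [sampleDCov_eq, sampleDCov_eq, sampleDCov_eq]
  exact alg2 _ _ _ _ _ _ _ _ _ _ _ _ _ _ _ hc1 hc2 hD hSb h0.le hF2N hcc hA1 hA2 hA3

/-- Decomposition theorem (Theorem 1): the difference between the private random-projected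
distance covariance estimator and its non-private counterpart is bounded by a distance
covariance of the noise with the projected `Y` data plus an explicit cross error term. -/
theorem private_dcov_decomposition (n K p q : ℕ) (hn : 4 ≤ n) (hK : 1 ≤ K)
    (X : Fin n → Fin p → ℝ) (Y : Fin n → Fin q → ℝ)
    (N : Fin n → ℝ) (u : Fin K → Fin p → ℝ) (v : Fin K → Fin q → ℝ) :
    (∑ k, (Cconst p * Cconst q / (K : ℝ)) *
        sampleDCov n (fun i => (∑ j, u k j * X i j) + N i) (fun i => ∑ j, v k j * Y i j))
      - (∑ k, (Cconst p * Cconst q / (K : ℝ)) *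
        sampleDCov n (fun i => ∑ j, u k j * X i j) (fun i => ∑ j, v k j * Y i j)) ≤
      (∑ k, (Cconst p * Cconst q / (K : ℝ)) *
        sampleDCov n N (fun i => ∑ j, v k j * Y i j))
      + ∑ k, (4 * Cconst p * Cconst q /
            ((K : ℝ) * (n : ℝ) * ((n : ℝ) - 2) * ((n : ℝ) - 3))) *
          ∑ i, (∑ l, |N i - N l|) *
            (∑ l, |(∑ j, v k j * Y i j) - (∑ j, v k j * Y l j)|) := by
  have hC : 0 ≤ Cconst p * Cconst q / (K : ℝ) :=
    div_nonneg (mul_nonneg (Cconst_nonneg p) (Cconst_nonneg q)) (Nat.cast_nonneg K)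
  rw [← Finset.sum_sub_distrib, ← Finset.sum_add_distrib]
  refine Finset.sum_le_sum fun k _ => ?_
  have hkey := key n hn (fun i => ∑ j, u k j * X i j) N (fun i => ∑ j, v k j * Y i j)
  have h := mul_le_mul_of_nonneg_left hkey hC
  have e2 : Cconst p * Cconst q / (K : ℝ) * (4 / ((n:ℝ) * ((n:ℝ) - 2) * ((n:ℝ) - 3))) =
      4 * Cconst p * Cconst q / ((K : ℝ) * (n : ℝ) * ((n : ℝ) - 2) * ((n : ℝ) - 3)) := by
    rw [div_mul_div_comm]
    ring
  have e : Cconst p * Cconst q / (K : ℝ) *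
      (sampleDCov n N (fun i => ∑ j, v k j * Y i j) +
        4 / ((n:ℝ) * ((n:ℝ) - 2) * ((n:ℝ) - 3)) *
          ∑ i, (∑ l, |N i - N l|) *
            (∑ l, |(∑ j, v k j * Y i j) - (∑ j, v k j * Y l j)|)) =
      Cconst p * Cconst q / (K : ℝ) * sampleDCov n N (fun i => ∑ j, v k j * Y i j) +
        4 * Cconst p * Cconst q / ((K : ℝ) * (n : ℝ) * ((n : ℝ) - 2) * ((n : ℝ) - 3)) *
          ∑ i, (∑ l, |N i - N l|) *
            (∑ l, |(∑ j, v k j * Y i j) - (∑ j, v k j * Y l j)|) := by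
    rw [mul_add, ← mul_assoc, e2]
  linarith [h, e]
end

section
/- Let N_1, …, N_n (n ≥ 2) be i.i.d. real Gaussian random variables with mean 0 and variance σ² > 0, fix an index i ∈ {1, …, n}, and let t > 0. Then P( Σ_{l=1}^n |N_i − N_l| ≥ n·t ) ≤ 2^n · exp( −n t² / (2σ²(n−1)) ). -/
/-!
By the triangle inequality, `∑ l, |N i - N l| ≤ ∑ l, c l * |N l|` with `c i = n - 1` and
`c l = 1` otherwise, a weighted sum of independent variables. Since
`exp (s |x|) ≤ exp (s x) + exp (-s x)`, each `|N l|` has moment generating function at most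
`2 exp (σ² s² / 2)`, so the weighted sum has moment generating function at most
`2 ^ n exp (σ² (∑ l, c l ^ 2) s² / 2)` with `∑ l, c l ^ 2 = n (n - 1)`. The Chernoff bound at
the optimal `s` gives the claim.
-/

open MeasureTheory ProbabilityTheory Real Finset
open scoped BigOperators NNReal

section TriangleWeight

variable {ι : Type*} [Fintype ι] [DecidableEq ι]

def triangleWeight (i l : ι) : ℝ := if l = i then Fintype.card ι - 1 else 1

lemma sum_abs_sub_le_sum_triangleWeight_mul_abs (x : ι → ℝ) (i : ι) :
    ∑ l, |x i - x l| ≤ ∑ l, triangleWeight i l * |x l| := by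
  have hcard : ((univ.erase i).card : ℝ) = Fintype.card ι - 1 := by
    rw [card_erase_of_mem (mem_univ i), card_univ, Nat.cast_sub (Fintype.card_pos_iff.2 ⟨i⟩)]
    simp
  have hrhs : ∑ l, triangleWeight i l * |x l|
      = (Fintype.card ι - 1) * |x i| + ∑ l ∈ univ.erase i, |x l| := by
    rw [← add_sum_erase _ _ (mem_univ i), triangleWeight, if_pos rfl]
    congr 1
    exact sum_congr rfl fun l hl ↦ by
      rw [triangleWeight, if_neg (ne_of_mem_erase hl), one_mul]
  rw [hrhs, ← add_sum_erase _ _ (mem_univ i), sub_self, abs_zero, zero_add]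
  calc ∑ l ∈ univ.erase i, |x i - x l| ≤ ∑ l ∈ univ.erase i, (|x i| + |x l|) :=
        sum_le_sum fun l _ ↦ abs_sub _ _
    _ = _ := by rw [sum_add_distrib, sum_const, nsmul_eq_mul, hcard]

lemma sum_triangleWeight_sq (i : ι) :
    ∑ l, triangleWeight i l ^ 2 = Fintype.card ι * (Fintype.card ι - 1) := by
  rw [← add_sum_erase _ _ (mem_univ i), triangleWeight, if_pos rfl,
    sum_congr rfl fun l hl ↦ by rw [triangleWeight, if_neg (ne_of_mem_erase hl), one_pow],
    sum_const, nsmul_eq_mul, mul_one, card_erase_of_mem (mem_univ i), card_univ,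
    Nat.cast_sub (Fintype.card_pos_iff.2 ⟨i⟩)]
  push_cast
  ring

end TriangleWeight

lemma exp_mul_abs_le_add (s x : ℝ) : exp (s * |x|) ≤ exp (s * x) + exp (-s * x) := by
  rcases abs_cases x with ⟨h, _⟩ | ⟨h, _⟩
  · rw [h]; linarith [exp_pos (-s * x)]
  · rw [h, mul_neg, ← neg_mul]; linarith [exp_pos (s * x)]

section Gaussian

variable {Ω : Type*} [MeasurableSpace Ω] {P : Measure Ω} [IsProbabilityMeasure P]
  {X : Ω → ℝ} {v : ℝ≥0}

lemma integrable_exp_mul_of_map_eq_gaussianReal (hX : P.map X = gaussianReal 0 v) (s : ℝ) :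
    Integrable (fun ω ↦ exp (s * X ω)) P := by
  rw [← mgf_pos_iff, mgf_gaussianReal hX]
  exact exp_pos _

lemma integrable_exp_mul_abs_of_map_eq_gaussianReal (hX : P.map X = gaussianReal 0 v) (s : ℝ) :
    Integrable (fun ω ↦ exp (s * |X ω|)) P :=
  integrable_exp_mul_abs (integrable_exp_mul_of_map_eq_gaussianReal hX s)
    (integrable_exp_mul_of_map_eq_gaussianReal hX (-s))

lemma mgf_abs_le_of_map_eq_gaussianReal (hX : P.map X = gaussianReal 0 v) (s : ℝ) :
    mgf (fun ω ↦ |X ω|) P s ≤ 2 * exp (v * s ^ 2 / 2) := by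
  have hpos := integrable_exp_mul_of_map_eq_gaussianReal hX s
  have hneg := integrable_exp_mul_of_map_eq_gaussianReal hX (-s)
  calc mgf (fun ω ↦ |X ω|) P s
      ≤ ∫ ω, (exp (s * X ω) + exp (-s * X ω)) ∂P :=
        integral_mono_of_nonneg (ae_of_all _ fun _ ↦ (exp_pos _).le) (hpos.add hneg)
          (ae_of_all _ fun ω ↦ exp_mul_abs_le_add s (X ω))
    _ = mgf X P s + mgf X P (-s) := integral_add hpos hneg
    _ = 2 * exp (v * s ^ 2 / 2) := by
        rw [mgf_gaussianReal hX, mgf_gaussianReal hX, neg_sq]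
        ring_nf

end Gaussian

lemma measureReal_ge_le_of_mgf_le {Ω : Type*} [MeasurableSpace Ω] {μ : Measure Ω}
    [IsFiniteMeasure μ] {Y : Ω → ℝ} {C a x : ℝ} (ha : 0 < a) (hx : 0 ≤ x)
    (h_int : ∀ t, 0 ≤ t → Integrable (fun ω ↦ exp (t * Y ω)) μ)
    (h_mgf : ∀ t, 0 ≤ t → mgf Y μ t ≤ C * exp (a * t ^ 2 / 2)) :
    μ.real {ω | x ≤ Y ω} ≤ C * exp (-x ^ 2 / (2 * a)) := by
  have ht : 0 ≤ x / a := div_nonneg hx ha.le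
  calc μ.real {ω | x ≤ Y ω}
      ≤ exp (-(x / a) * x) * mgf Y μ (x / a) := measure_ge_le_exp_mul_mgf x ht (h_int _ ht)
    _ ≤ exp (-(x / a) * x) * (C * exp (a * (x / a) ^ 2 / 2)) := by
        gcongr
        exact h_mgf _ ht
    _ = C * exp (-x ^ 2 / (2 * a)) := by
        rw [mul_left_comm, ← exp_add]
        congr 2
        field_simp
        ring

lemma ProbabilityTheory.iIndepFun.const_mul_abs {Ω ι : Type*} [MeasurableSpace Ω]
    {P : Measure Ω} {N : ι → Ω → ℝ} (hindep : iIndepFun N P) (c : ι → ℝ) :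
    iIndepFun (fun l ω ↦ c l * |N l ω|) P :=
  hindep.comp (fun l x ↦ c l * |x|) fun l ↦ measurable_abs.const_mul (c l)

section WeightedSum

variable {Ω ι : Type*} [MeasurableSpace Ω] {P : Measure Ω} [IsProbabilityMeasure P]
  [Fintype ι] {N : ι → Ω → ℝ} {v : ℝ≥0}

lemma mgf_sum_mul_abs_le (hmeas : ∀ l, Measurable (N l)) (hindep : iIndepFun N P)
    (hdist : ∀ l, P.map (N l) = gaussianReal 0 v) (c : ι → ℝ) (t : ℝ) :
    mgf (fun ω ↦ ∑ l, c l * |N l ω|) P t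
      ≤ 2 ^ Fintype.card ι * exp ((v * ∑ l, c l ^ 2) * t ^ 2 / 2) := by
  have hsum : (fun ω ↦ ∑ l, c l * |N l ω|) = ∑ l, fun ω ↦ c l * |N l ω| := by
    ext ω
    simp only [Finset.sum_apply]
  calc mgf (fun ω ↦ ∑ l, c l * |N l ω|) P t
      = ∏ l, mgf (fun ω ↦ |N l ω|) P (c l * t) := by
        rw [hsum, (hindep.const_mul_abs c).mgf_sum fun l ↦ (hmeas l).abs.const_mul (c l)]
        simp only [mgf_const_mul]
    _ ≤ ∏ l, 2 * exp (v * (c l * t) ^ 2 / 2) :=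
        prod_le_prod (fun _ _ ↦ mgf_nonneg) fun l _ ↦
          mgf_abs_le_of_map_eq_gaussianReal (hdist l) _
    _ = 2 ^ Fintype.card ι * exp ((v * ∑ l, c l ^ 2) * t ^ 2 / 2) := by
        rw [prod_mul_distrib, prod_const, card_univ, ← exp_sum, mul_sum, sum_mul, sum_div]
        simp only [mul_pow, mul_assoc]

lemma integrable_exp_mul_sum_mul_abs (hmeas : ∀ l, Measurable (N l)) (hindep : iIndepFun N P)
    (hdist : ∀ l, P.map (N l) = gaussianReal 0 v) (c : ι → ℝ) (t : ℝ) :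
    Integrable (fun ω ↦ exp (t * ∑ l, c l * |N l ω|)) P := by
  have := (hindep.const_mul_abs c).integrable_exp_mul_sum (t := t) (s := univ)
    (fun l ↦ (hmeas l).abs.const_mul (c l))
    fun l _ ↦ by simpa only [mul_assoc, mul_left_comm t] using
      integrable_exp_mul_abs_of_map_eq_gaussianReal (hdist l) (c l * t)
  simpa only [Finset.sum_apply] using this

end WeightedSum

/-- Tail bound for `∑_l |N_i - N_l|` for i.i.d. centered Gaussians with variance `σ²`:
`P(∑_l |N_i - N_l| ≥ n t) ≤ 2^n exp(-n t² / (2 σ² (n-1)))`. -/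
theorem tail_bound_sum_abs_gaussian_diff {Ω : Type*} [MeasurableSpace Ω]
    (P : Measure Ω) [IsProbabilityMeasure P]
    (n : ℕ) (hn : 2 ≤ n) (N : Fin n → Ω → ℝ) (σ : ℝ) (hσ : 0 < σ)
    (hmeas : ∀ l, Measurable (N l))
    (hindep : iIndepFun N P)
    (hdist : ∀ l, Measure.map (N l) P = gaussianReal 0 ⟨σ ^ 2, sq_nonneg σ⟩)
    (i : Fin n) (t : ℝ) (ht : 0 < t) :
    (P {ω | (n : ℝ) * t ≤ ∑ l, |N i ω - N l ω|}).toReal ≤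
      2 ^ n * Real.exp (-(n : ℝ) * t ^ 2 / (2 * σ ^ 2 * ((n : ℝ) - 1))) := by
  have hn' : (1 : ℝ) < n := by exact_mod_cast hn
  have hc : ∑ l, triangleWeight i l ^ 2 = n * (n - 1) := by
    simpa only [Fintype.card_fin] using sum_triangleWeight_sq i
  have hvar : 0 < σ ^ 2 * ∑ l, triangleWeight i l ^ 2 := by
    rw [hc]
    have := sub_pos.2 hn'
    positivity
  calc P.real {ω | (n : ℝ) * t ≤ ∑ l, |N i ω - N l ω|}
      ≤ P.real {ω | (n : ℝ) * t ≤ ∑ l, triangleWeight i l * |N l ω|} :=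
        measureReal_mono fun ω hω ↦
          hω.trans (sum_abs_sub_le_sum_triangleWeight_mul_abs (N · ω) i)
    _ ≤ 2 ^ n * exp (-(n * t) ^ 2 / (2 * (σ ^ 2 * ∑ l, triangleWeight i l ^ 2))) := by
        simpa only [Fintype.card_fin] using measureReal_ge_le_of_mgf_le hvar (by positivity)
          (fun s _ ↦ integrable_exp_mul_sum_mul_abs hmeas hindep hdist _ s)
          fun s _ ↦ mgf_sum_mul_abs_le hmeas hindep hdist _ s
    _ = 2 ^ n * exp (-n * t ^ 2 / (2 * σ ^ 2 * (n - 1))) := by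
        rw [hc]
        congr 2
        field_simp
end

section
/- (Sample equivalence of distance covariance and HSIC with the bijective induced kernel.) Let n ≥ 2 and let D_X, D_Y be n×n real matrices (the pairwise distance matrices of two samples). Define the bijective induced kernel matrices K̂_X with entries K̂_X(i,j) = max_{s,t ∈ [n]} D_X(s,t) − D_X(i,j) and K̂_Y with entries K̂_Y(i,j) = max_{s,t ∈ [n]} D_Y(s,t) − D_Y(i,j), and let H = I_n − (1/n)·J be the double-centering matrix, J the all-ones matrix. Then the HSIC statistic computed with the induced kernels equals the distance covariance statistic computed with the distances: (n−1)^{−2} · trace( K̂_X · H · K̂_Y · H ) = (n−1)^{−2} · trace( D_X · H · D_Y · H ). -/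
open Matrix

/-- Sample equivalence of distance covariance and HSIC with the bijective induced kernel:
with `K̂_X(i,j) = max_{s,t} D_X(s,t) - D_X(i,j)` (and similarly for `Y`), the HSIC
statistic with the induced kernels equals the distance covariance statistic. -/
theorem hsic_eq_dcov_induced_kernel (n : ℕ) (hn : 2 ≤ n)
    (DX DY : Matrix (Fin n) (Fin n) ℝ) :
    let J : Matrix (Fin n) (Fin n) ℝ := Matrix.of fun _ _ => (1 : ℝ)
    let H : Matrix (Fin n) (Fin n) ℝ := 1 - ((n : ℝ)⁻¹) • J
    let KX : Matrix (Fin n) (Fin n) ℝ :=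
      Matrix.of fun i j => (⨆ s, ⨆ t, DX s t) - DX i j
    let KY : Matrix (Fin n) (Fin n) ℝ :=
      Matrix.of fun i j => (⨆ s, ⨆ t, DY s t) - DY i j
    (1 / ((n : ℝ) - 1) ^ 2) * (KX * H * KY * H).trace =
      (1 / ((n : ℝ) - 1) ^ 2) * (DX * H * DY * H).trace := by
  intro J H KX KY
  have hn0 : (n : ℝ) ≠ 0 := by positivity
  have hJH : J * H = 0 := by
    ext i j
    simp only [J, H, mul_apply, Matrix.sub_apply, Matrix.smul_apply, Matrix.one_apply,
      Matrix.of_apply, smul_eq_mul, Matrix.zero_apply]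
    simp only [one_mul, mul_one, Finset.sum_sub_distrib, Finset.sum_ite_eq, Finset.sum_ite_eq',
      Finset.mem_univ, if_true, Finset.sum_const, Finset.card_univ, Fintype.card_fin,
      nsmul_eq_mul]
    rw [mul_inv_cancel₀ hn0]; ring
  have hKX : KX = (⨆ s, ⨆ t, DX s t) • J - DX := by
    ext i j; simp [KX, J]
  have hKY : KY = (⨆ s, ⨆ t, DY s t) • J - DY := by
    ext i j; simp [KY, J]
  have hX : KX * H = -(DX * H) := by
    rw [hKX, Matrix.sub_mul, Matrix.smul_mul, hJH, smul_zero, zero_sub]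
  have hY : KY * H = -(DY * H) := by
    rw [hKY, Matrix.sub_mul, Matrix.smul_mul, hJH, smul_zero, zero_sub]
  have : KX * H * KY * H = DX * H * DY * H := by
    rw [mul_assoc (KX * H), hX, hY, neg_mul_neg, ← mul_assoc]
  rw [this]
end
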